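/- Let n ≥ 3 and let A be the complex algebra with basis e_1, e_2, …, e_n and multiplication e_i ⋄ e_j = i(i−1)·e_{i+j−2} if 3 ≤ i+j ≤ n+2 and e_i ⋄ e_j = 0 otherwise (the algebra IDD(K^1_n, 2, 0)). Then Der(A) is the one-dimensional linear span of the derivation φ defined on the basis by φ(e_i) = (i−2)·e_i for 1 ≤ i ≤ n. -/

import Mathlib

/-- The basis index set `{1, …, n}`. -/
abbrev Ix (n : ℕ) := ↥(Finset.Icc 1 n)

/-- The vector space with basis `e_1, …, e_n`; the `p`-th coordinate of a vector is its
coefficient at `e_p` (so `e_i = Pi.single i 1`). -/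
abbrev V (n : ℕ) := Ix n → ℂ

/-- The multiplication of `IDD(K^1_n, 2, 0)`: `e_i ⋄ e_j = i(i−1)·e_{i+j−2}` if `3 ≤ i+j ≤ n+2` and `0` otherwise. -/
noncomputable def mulA (n : ℕ) (x y : V n) : V n := fun p =>
  ∑ i : Ix n, ∑ j : Ix n, x i * y j * (if i.1 + j.1 = p.1 + 2 then (i.1 : ℂ) * ((i.1 : ℂ) - 1) else 0)

/-- `D` is a derivation of `IDD(K^1_n, 2, 0)`. -/
def IsDer (n : ℕ) (D : V n →ₗ[ℂ] V n) : Prop :=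
  ∀ x y, D (mulA n x y) = mulA n (D x) y + mulA n x (D y)

/-- The derivation `φ(e_i) = (i−2)·e_i`. -/
noncomputable def phiD (n : ℕ) : V n →ₗ[ℂ] V n :=
  Matrix.mulVecLin (fun p s : Ix n => if p = s then (s.1 : ℂ) - 2 else 0)

/-
Right multiplication by `e_2` is diagonal, `e_i ⋄ e_2 = i (i - 1) e_i`, with pairwise distinct
eigenvalues. A derivation `D` kills `e_2`, hence commutes with this operator and is itself diagonal,
`D e_i = λ_i e_i`. Then `e_2 ⋄ e_2 = 2 e_2` gives `λ_2 = 0` and `e_3 ⋄ e_m = 6 e_{m+1}` gives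
`λ_{m+1} = λ_3 + λ_m`, so `λ_m = (m - 2) λ_3`, i.e. `D = λ_3 φ`.
-/

open Finset

/- Basis vectors and coordinates are indexed by all of `ℕ` and vanish outside `{1, …, n}`, so that
shifted indices such as `p + 2 - j` need no range conditions. -/
def basisVec (n m : ℕ) : V n := fun p => if (p : ℕ) = m then 1 else 0

noncomputable def coeff (n : ℕ) (x : V n) (m : ℕ) : ℂ :=
  if h : m ∈ Icc 1 n then x ⟨m, h⟩ else 0

def structConst (m : ℕ) : ℂ := m * (m - 1)

noncomputable def entry {n : ℕ} (D : V n →ₗ[ℂ] V n) (p m : ℕ) : ℂ := coeff n (D (basisVec n m)) p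

lemma structConst_ne_zero {m : ℕ} (hm : 2 ≤ m) : structConst m ≠ 0 := by
  have h0 : (m : ℂ) ≠ 0 := by exact_mod_cast (by omega : m ≠ 0)
  have h1 : (m : ℂ) - 1 ≠ 0 := sub_ne_zero.2 (by exact_mod_cast (by omega : m ≠ 1))
  exact mul_ne_zero h0 h1

lemma structConst_injOn : Set.InjOn structConst (Set.Ici 1) := by
  intro a ha b hb h
  rw [Set.mem_Ici] at ha hb
  have hfactor : ((a : ℂ) - b) * ((a + b : ℕ) - 1) = 0 := by
    unfold structConst at h; push_cast; linear_combination h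
  rcases mul_eq_zero.1 hfactor with hab | hab
  · exact_mod_cast sub_eq_zero.1 hab
  · have : a + b = 1 := by exact_mod_cast sub_eq_zero.1 hab
    omega

lemma coeff_coe {n : ℕ} (x : V n) (p : Ix n) : coeff n x p = x p := by
  rw [coeff, dif_pos p.2]

lemma coeff_of_not_mem {n m : ℕ} (x : V n) (hm : m ∉ Icc 1 n) : coeff n x m = 0 := by
  rw [coeff, dif_neg hm]

lemma coeff_smul {n : ℕ} (c : ℂ) (x : V n) (m : ℕ) : coeff n (c • x) m = c * coeff n x m := by
  unfold coeff; split_ifs <;> simp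

lemma single_eq_basisVec {n : ℕ} (i : Ix n) : Pi.single i 1 = basisVec n i := by
  ext p
  rw [Pi.single_apply, basisVec]
  exact if_congr Subtype.ext_iff rfl rfl

lemma sum_ite_eq_coeff {n : ℕ} (x : V n) (m : ℕ) :
    ∑ j : Ix n, (if (j : ℕ) = m then x j else 0) = coeff n x m := by
  by_cases hm : m ∈ Icc 1 n
  · rw [coeff, dif_pos hm, sum_eq_single_of_mem ⟨m, hm⟩ (mem_univ _), if_pos rfl]
    exact fun j _ hj => if_neg fun h => hj (Subtype.ext h)
  · rw [coeff_of_not_mem x hm]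
    exact sum_eq_zero fun j _ => if_neg fun h : (j : ℕ) = m => hm (h ▸ j.2)

lemma sum_mul_ite_add_eq {n : ℕ} (x : V n) (f : ℕ → ℂ) (a q : ℕ) :
    ∑ j : Ix n, x j * (if (j : ℕ) + a = q then f j else 0) = f (q - a) * coeff n x (q - a) := by
  rw [← coeff_smul, ← sum_ite_eq_coeff]
  refine sum_congr rfl fun j _ => ?_
  have hj := (mem_Icc.1 j.2).1
  by_cases h : (j : ℕ) + a = q
  · rw [if_pos h, if_pos (by omega), Pi.smul_apply, smul_eq_mul, show q - a = j by omega]; ring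
  · rw [if_neg h, if_neg (by omega), mul_zero]

lemma mulA_basisVec_left_apply {n : ℕ} (a : Ix n) (y : V n) (p : Ix n) :
    mulA n (basisVec n a) y p = structConst a * coeff n y (p + 2 - a) := by
  rw [mulA, sum_eq_single_of_mem a (mem_univ _),
    ← sum_mul_ite_add_eq y (fun _ => structConst a)]
  · refine sum_congr rfl fun j _ => ?_
    rw [basisVec, if_pos rfl, one_mul, add_comm]
    rfl
  · intro i _ hi
    refine sum_eq_zero fun j _ => ?_
    rw [basisVec, if_neg (mt Subtype.ext hi), zero_mul, zero_mul]

lemma mulA_basisVec_right_apply {n : ℕ} (x : V n) (b : Ix n) (p : Ix n) :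
    mulA n x (basisVec n b) p = structConst (p + 2 - b) * coeff n x (p + 2 - b) := by
  rw [mulA, ← sum_mul_ite_add_eq]
  refine sum_congr rfl fun i _ => ?_
  rw [sum_eq_single_of_mem b (mem_univ _), basisVec, if_pos rfl, mul_one]
  · rfl
  · intro j _ hj
    rw [basisVec, if_neg (mt Subtype.ext hj), mul_zero, zero_mul]

lemma mulA_basisVec_basisVec {n : ℕ} (a b : Ix n) :
    mulA n (basisVec n a) (basisVec n b) = structConst a • basisVec n (a + b - 2) := by
  ext p
  rw [mulA_basisVec_left_apply, Pi.smul_apply, smul_eq_mul, coeff]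
  have ha := (mem_Icc.1 a.2).1
  have hb := mem_Icc.1 b.2
  have hp := (mem_Icc.1 p.2).1
  split_ifs with hmem <;> simp only [basisVec, mem_Icc] at hmem ⊢ <;> split_ifs <;>
    first | rfl | omega

lemma entry_of_not_mem {n : ℕ} (D : V n →ₗ[ℂ] V n) {p : ℕ} (m : ℕ) (hp : p ∉ Icc 1 n) :
    entry D p m = 0 :=
  coeff_of_not_mem _ hp

lemma IsDer.entry_mul {n : ℕ} {D : V n →ₗ[ℂ] V n} (hD : IsDer n D) {i j p : ℕ}
    (hi : i ∈ Icc 1 n) (hj : j ∈ Icc 1 n) (hp : p ∈ Icc 1 n) :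
    structConst i * entry D p (i + j - 2) =
      structConst (p + 2 - j) * entry D (p + 2 - j) i + structConst i * entry D (p + 2 - i) j := by
  have h := congrFun (hD (basisVec n (⟨i, hi⟩ : Ix n)) (basisVec n (⟨j, hj⟩ : Ix n))) ⟨p, hp⟩
  rw [mulA_basisVec_basisVec, map_smul, Pi.smul_apply, smul_eq_mul, Pi.add_apply,
    mulA_basisVec_left_apply, mulA_basisVec_right_apply] at h
  rw [entry, coeff, dif_pos hp]
  exact h

lemma mulA_smul_left (n : ℕ) (c : ℂ) (x y : V n) : mulA n (c • x) y = c • mulA n x y := by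
  ext p
  simp only [mulA, Pi.smul_apply, smul_eq_mul, mul_sum]
  exact sum_congr rfl fun i _ => sum_congr rfl fun j _ => by ring

lemma mulA_smul_right (n : ℕ) (c : ℂ) (x y : V n) : mulA n x (c • y) = c • mulA n x y := by
  ext p
  simp only [mulA, Pi.smul_apply, smul_eq_mul, mul_sum]
  exact sum_congr rfl fun i _ => sum_congr rfl fun j _ => by ring

lemma IsDer.smul {n : ℕ} {D : V n →ₗ[ℂ] V n} (hD : IsDer n D) (c : ℂ) : IsDer n (c • D) := by
  intro x y
  simp only [LinearMap.smul_apply, hD x y, mulA_smul_left, mulA_smul_right, smul_add]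

lemma phiD_apply (n : ℕ) (x : V n) (p : Ix n) : phiD n x p = ((p : ℕ) - 2) * x p := by
  show Matrix.mulVec (fun p s : Ix n => if p = s then ((s : ℕ) : ℂ) - 2 else 0) x p = _
  simp [Matrix.mulVec, dotProduct, ite_mul]

/- `⋄` is graded by `deg e_i = i - 2`, and `φ` multiplies `e_i` by its degree. -/
lemma isDer_phiD (n : ℕ) : IsDer n (phiD n) := by
  intro x y
  ext p
  simp only [mulA, phiD_apply, Pi.add_apply, mul_sum, ← sum_add_distrib]
  refine sum_congr rfl fun i _ => sum_congr rfl fun j _ => ?_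
  split_ifs with h
  · have h' : ((i : ℕ) : ℂ) + (j : ℕ) = (p : ℕ) + 2 := by exact_mod_cast h
    linear_combination (-(x i * y j * (((i : ℕ) : ℂ) * ((i : ℕ) - 1)))) * h'
  · ring

lemma phiD_ne_zero {n : ℕ} (hn : 1 ≤ n) : phiD n ≠ 0 := by
  intro h
  have h1 := phiD_apply n (Pi.single ⟨1, mem_Icc.2 ⟨le_rfl, hn⟩⟩ 1) ⟨1, mem_Icc.2 ⟨le_rfl, hn⟩⟩
  rw [h, Pi.single_eq_same] at h1
  norm_num at h1

section Derivation

variable {n : ℕ} {D : V n →ₗ[ℂ] V n}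

/- Applying `D` to `e_2 ⋄ e_2 = 2 e_2` kills the `e_q`-components of `D e_2` for `q ≥ 2`; the
`e_1`-component is killed by comparing `e_3 ⋄ e_2 = 6 e_3` with `e_3 ⋄ e_1 = 6 e_2`. -/
lemma IsDer.entry_two_eq_zero (hD : IsDer n D) (hn : 3 ≤ n) (q : ℕ) : entry D q 2 = 0 := by
  rcases Nat.lt_or_ge n q with hq | hq
  · exact entry_of_not_mem D 2 (by simp; omega)
  obtain rfl | rfl | hq2 : q = 0 ∨ q = 1 ∨ 2 ≤ q := by omega
  · exact entry_of_not_mem D 2 (by simp)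
  · have h₁ := hD.entry_mul (i := 3) (j := 2) (p := 2) (mem_Icc.2 ⟨by omega, hn⟩)
      (mem_Icc.2 ⟨by omega, by omega⟩) (mem_Icc.2 ⟨by omega, by omega⟩)
    have h₂ := hD.entry_mul (i := 3) (j := 1) (p := 1) (mem_Icc.2 ⟨by omega, hn⟩)
      (mem_Icc.2 ⟨le_rfl, by omega⟩) (mem_Icc.2 ⟨le_rfl, by omega⟩)
    rw [entry_of_not_mem D 1 (by simp)] at h₂
    norm_num [structConst] at h₁ h₂
    linear_combination (h₁ + 2 * h₂) / 6
  · have h := hD.entry_mul (i := 2) (j := 2) (p := q) (mem_Icc.2 ⟨by omega, by omega⟩)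
      (mem_Icc.2 ⟨by omega, by omega⟩) (mem_Icc.2 ⟨by omega, hq⟩)
    simp only [Nat.add_sub_cancel] at h
    have h' : structConst q * entry D q 2 = 0 := by linear_combination -h
    exact (mul_eq_zero.1 h').resolve_left (structConst_ne_zero hq2)

/- As `D e_2 = 0`, `D` commutes with the right multiplication by `e_2`, which is diagonal with the
pairwise distinct eigenvalues `i (i - 1)`. -/
lemma IsDer.entry_eq_zero_of_ne (hD : IsDer n D) (hn : 3 ≤ n) {i p : ℕ} (hi : i ∈ Icc 1 n)
    (hp : p ∈ Icc 1 n) (hpi : p ≠ i) : entry D p i = 0 := by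
  have h := hD.entry_mul (j := 2) hi (mem_Icc.2 ⟨by omega, by omega⟩) hp
  simp only [Nat.add_sub_cancel, hD.entry_two_eq_zero hn, mul_zero, add_zero] at h
  have h' : (structConst i - structConst p) * entry D p i = 0 := by linear_combination h
  refine (mul_eq_zero.1 h').resolve_left (sub_ne_zero.2 fun hC => hpi ?_)
  exact (structConst_injOn (mem_Icc.1 hi).1 (mem_Icc.1 hp).1 hC).symm

lemma IsDer.entry_succ_self (hD : IsDer n D) (hn : 3 ≤ n) {m : ℕ} (hm : 1 ≤ m) (hmn : m + 1 ≤ n) :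
    entry D (m + 1) (m + 1) = entry D 3 3 + entry D m m := by
  have h := hD.entry_mul (i := 3) (j := m) (p := m + 1) (mem_Icc.2 ⟨by omega, hn⟩)
    (mem_Icc.2 ⟨hm, by omega⟩) (mem_Icc.2 ⟨by omega, hmn⟩)
  rw [show 3 + m - 2 = m + 1 by omega, show m + 1 + 2 - m = 3 by omega,
    show m + 1 + 2 - 3 = m by omega] at h
  norm_num [structConst] at h
  linear_combination h / 6

lemma IsDer.entry_self (hD : IsDer n D) (hn : 3 ≤ n) {m : ℕ} (hm : 1 ≤ m) (hmn : m ≤ n) :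
    entry D m m = (m - 2) * entry D 3 3 := by
  induction m, hm using Nat.le_induction with
  | base =>
    have h := hD.entry_succ_self hn le_rfl (by omega)
    rw [hD.entry_two_eq_zero hn] at h
    push_cast
    linear_combination -h
  | succ m hm ih =>
    rw [hD.entry_succ_self hn hm hmn, ih (by omega)]
    push_cast
    ring

lemma IsDer.eq_smul_phiD (hD : IsDer n D) (hn : 3 ≤ n) : D = entry D 3 3 • phiD n := by
  refine (Pi.basisFun ℂ (Ix n)).ext fun i => funext fun p => ?_
  rw [Pi.basisFun_apply, LinearMap.smul_apply, Pi.smul_apply, smul_eq_mul, phiD_apply,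
    single_eq_basisVec, show D (basisVec n i) p = entry D p i from (coeff_coe _ p).symm]
  by_cases hpi : p = i
  · subst hpi
    rw [hD.entry_self hn (mem_Icc.1 p.2).1 (mem_Icc.1 p.2).2, basisVec, if_pos rfl]
    ring
  · rw [hD.entry_eq_zero_of_ne hn i.2 p.2 (mt Subtype.ext hpi), basisVec,
      if_neg (mt Subtype.ext hpi), mul_zero, mul_zero]

end Derivation

theorem stmt13 (n : ℕ) (hn : 3 ≤ n) :
    {D : V n →ₗ[ℂ] V n | IsDer n D}
      = (Submodule.span ℂ {phiD n} : Submodule ℂ (V n →ₗ[ℂ] V n))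
    ∧ phiD n ≠ 0 := by
  refine ⟨Set.ext fun D => ⟨fun hD => ?_, fun hD => ?_⟩, phiD_ne_zero (by omega)⟩
  · exact Submodule.mem_span_singleton.2 ⟨_, (hD.eq_smul_phiD hn).symm⟩
  · obtain ⟨c, rfl⟩ := Submodule.mem_span_singleton.1 hD
    exact (isDer_phiD n).smul c
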